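/- arXiv:1806.02046 — 2 statements merged into one kernel-verified Lean document; each statement's English description precedes it below -/
import Mathlib

section
/- Let A_1, ..., A_m be real symmetric n×n matrices defining the linear sensing map A(X)_i = ⟨A_i, X⟩, let b ∈ ℝ^m, and let X⋆ ∈ ℝ^{n×n} be a positive semi-definite matrix with A(X⋆) = b. Suppose there exist φ ∈ ℝ^m and an invertible matrix V ∈ ℝ^{n×n} such that Σ_{i=1}^m φ_i A_i = V Vᵀ. Define M_i := V^{-1} A_i (V^{-1})ᵀ and suppose Y⋆ := Vᵀ X⋆ V is the unique minimizer of the nuclear norm over the affine set {Y ∈ ℝ^{n×n} : ⟨M_i, Y⟩ = b_i for all i}. Then the feasibility set {X ∈ ℝ^{n×n} : ⟨A_i, X⟩ = b_i for all i, X ⪰ 0} is exactly the singleton {X⋆}. -/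
/-!
The congruence `X ↦ Vᵀ X V` maps the PSD solutions of `⟨Aᵢ, X⟩ = bᵢ` injectively to PSD solutions
of `⟨Mᵢ, Y⟩ = bᵢ`. On PSD matrices the nuclear norm is the trace, and
`tr (Vᵀ X V) = ⟨V Vᵀ, X⟩ = ∑ φᵢ bᵢ` is the same for every such `X`; so every image is a nuclear-norm
minimizer, hence equals `Y⋆`.
-/

open Matrix

/-- The nuclear norm of a real square matrix: the trace of `√(Yᴴ Y)`
(for real matrices, `Yᴴ = Yᵀ`), i.e. the sum of the singular values. -/
noncomputable def nuclearNorm {n : ℕ} (Y : Matrix (Fin n) (Fin n) ℝ) : ℝ :=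
  ((((Matrix.posSemidef_conjTranspose_mul_self Y).1.eigenvectorUnitary : Matrix (Fin n) (Fin n) ℝ) *
    diagonal (fun i => Real.sqrt ((Matrix.posSemidef_conjTranspose_mul_self Y).1.eigenvalues i)) *
    (star (Matrix.posSemidef_conjTranspose_mul_self Y).1.eigenvectorUnitary : Matrix (Fin n) (Fin n) ℝ))).trace

namespace Matrix

variable {ι n R : Type*} [Fintype ι] [Fintype n] [CommRing R]

theorem trace_inv_congr_transpose_mul_congr [DecidableEq n] {V : Matrix n n R} (hV : IsUnit V.det)
    (A X : Matrix n n R) :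
    ((V⁻¹ * A * (V⁻¹)ᵀ)ᵀ * (Vᵀ * X * V)).trace = (Aᵀ * X).trace := by
  have hVV : (V⁻¹)ᵀ * Vᵀ = 1 := by rw [← transpose_mul, mul_nonsing_inv _ hV, transpose_one]
  calc ((V⁻¹ * A * (V⁻¹)ᵀ)ᵀ * (Vᵀ * X * V)).trace
      = (V⁻¹ * (Aᵀ * ((V⁻¹)ᵀ * Vᵀ) * X) * V).trace := by
        simp only [transpose_mul, transpose_transpose, Matrix.mul_assoc]
    _ = (Aᵀ * X).trace := by
        rw [hVV, Matrix.mul_one, trace_mul_cycle, mul_nonsing_inv _ hV, Matrix.one_mul]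

theorem trace_transpose_mul_mul_eq_sum {A : ι → Matrix n n R} {φ : ι → R} {V : Matrix n n R}
    (hsum : ∑ i, φ i • A i = V * Vᵀ) (X : Matrix n n R) :
    (Vᵀ * X * V).trace = ∑ i, φ i * ((A i)ᵀ * X).trace := by
  calc (Vᵀ * X * V).trace = (X * (∑ i, φ i • A i)ᵀ).trace := by
        rw [hsum, transpose_mul, transpose_transpose, trace_mul_cycle, trace_mul_comm]
    _ = ∑ i, φ i * ((A i)ᵀ * X).trace := by
        simp [transpose_sum, Matrix.mul_sum, trace_sum, trace_mul_comm X]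

theorem PosSemidef.transpose_mul_mul_same [PartialOrder R] [StarRing R] [TrivialStar R]
    {X : Matrix n n R} (hX : X.PosSemidef) (V : Matrix n n R) : (Vᵀ * X * V).PosSemidef := by
  simpa [conjTranspose_eq_transpose_of_trivial] using hX.conjTranspose_mul_mul_same V

end Matrix

open scoped MatrixOrder in
theorem nuclearNorm_eq_trace_of_posSemidef {n : ℕ} {Y : Matrix (Fin n) (Fin n) ℝ}
    (hY : Y.PosSemidef) : nuclearNorm Y = Y.trace := by
  have hYY := posSemidef_conjTranspose_mul_self Y
  have hsq : Yᴴ * Y = Y ^ 2 := by rw [sq, hY.1.eq]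
  calc nuclearNorm Y = (cfc Real.sqrt (Yᴴ * Y)).trace := by
        rw [hYY.1.cfc_eq, IsHermitian.cfc, Unitary.conjStarAlgAut_apply]; rfl
    _ = (CFC.sqrt (Y ^ 2)).trace := by
        rw [hsq, CFC.sqrt_eq_real_sqrt _ (nonneg_iff_posSemidef.mpr (hsq ▸ hYY)), cfcₙ_eq_cfc]
    _ = Y.trace := by rw [CFC.sqrt_sq Y (nonneg_iff_posSemidef.mpr hY)]

theorem psd_feasible_set_singleton_general
    {n m : ℕ}
    (A : Fin m → Matrix (Fin n) (Fin n) ℝ)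
    (b : Fin m → ℝ)
    (Xstar : Matrix (Fin n) (Fin n) ℝ)
    (hXstarPSD : Xstar.PosSemidef)
    (hXstarFit : ∀ i, ((A i)ᵀ * Xstar).trace = b i)
    (φ : Fin m → ℝ)
    (V : Matrix (Fin n) (Fin n) ℝ)
    (hV : IsUnit V.det)
    (hsum : ∑ i, φ i • A i = V * Vᵀ)
    (M : Fin m → Matrix (Fin n) (Fin n) ℝ)
    (hM : ∀ i, M i = V⁻¹ * A i * (V⁻¹)ᵀ)
    (Ystar : Matrix (Fin n) (Fin n) ℝ)
    (hYstar : Ystar = Vᵀ * Xstar * V)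
    (hYstarUnique : ∀ Y : Matrix (Fin n) (Fin n) ℝ,
      (∀ i, ((M i)ᵀ * Y).trace = b i) → Y ≠ Ystar →
        nuclearNorm Ystar < nuclearNorm Y) :
    {X : Matrix (Fin n) (Fin n) ℝ |
      (∀ i, ((A i)ᵀ * X).trace = b i) ∧ X.PosSemidef} = {Xstar} := by
  refine Set.eq_singleton_iff_unique_mem.mpr ⟨⟨hXstarFit, hXstarPSD⟩, ?_⟩
  rintro X ⟨hXfit, hXpsd⟩
  have hYfit : ∀ i, ((M i)ᵀ * (Vᵀ * X * V)).trace = b i := fun i => by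
    rw [hM i, trace_inv_congr_transpose_mul_congr hV, hXfit i]
  have hnorm : nuclearNorm (Vᵀ * X * V) = nuclearNorm Ystar := by
    rw [hYstar, nuclearNorm_eq_trace_of_posSemidef (hXpsd.transpose_mul_mul_same V),
      nuclearNorm_eq_trace_of_posSemidef (hXstarPSD.transpose_mul_mul_same V),
      trace_transpose_mul_mul_eq_sum hsum, trace_transpose_mul_mul_eq_sum hsum]
    simp only [hXfit, hXstarFit]
  have hY : Vᵀ * X * V = Vᵀ * Xstar * V := by
    by_contra hne
    exact (hYstarUnique _ hYfit (hYstar ▸ hne)).ne' hnorm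
  have hVu : IsUnit V := (isUnit_iff_isUnit_det V).mpr hV
  exact hVu.mul_right_cancel (((isUnit_transpose V).mpr hVu).mul_left_cancel
    (by simpa only [Matrix.mul_assoc] using hY))

/-- If the sensing matrices `A i` are symmetric, `X⋆ ⪰ 0` fits the measurements `b`,
some combination `∑ φ i • A i = V Vᵀ` with `V` invertible, and
`Y⋆ = Vᵀ X⋆ V` is the unique nuclear-norm minimizer over the affine set
`{Y | ⟨Mᵢ, Y⟩ = bᵢ}` where `Mᵢ = V⁻¹ Aᵢ (V⁻¹)ᵀ`, then the PSD feasibility set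
for the original measurements is exactly `{X⋆}`. -/
theorem psd_feasible_set_singleton
    {n m : ℕ}
    (A : Fin m → Matrix (Fin n) (Fin n) ℝ)
    (hAsymm : ∀ i, (A i).IsSymm)
    (b : Fin m → ℝ)
    (Xstar : Matrix (Fin n) (Fin n) ℝ)
    (hXstarPSD : Xstar.PosSemidef)
    (hXstarFit : ∀ i, ((A i)ᵀ * Xstar).trace = b i)
    (φ : Fin m → ℝ)
    (V : Matrix (Fin n) (Fin n) ℝ)
    (hV : IsUnit V.det)
    (hsum : ∑ i, φ i • A i = V * Vᵀ)
    (M : Fin m → Matrix (Fin n) (Fin n) ℝ)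
    (hM : ∀ i, M i = V⁻¹ * A i * (V⁻¹)ᵀ)
    (Ystar : Matrix (Fin n) (Fin n) ℝ)
    (hYstar : Ystar = Vᵀ * Xstar * V)
    (hYstarFeas : ∀ i, ((M i)ᵀ * Ystar).trace = b i)
    (hYstarUnique : ∀ Y : Matrix (Fin n) (Fin n) ℝ,
      (∀ i, ((M i)ᵀ * Y).trace = b i) → Y ≠ Ystar →
        nuclearNorm Ystar < nuclearNorm Y) :
    {X : Matrix (Fin n) (Fin n) ℝ |
      (∀ i, ((A i)ᵀ * X).trace = b i) ∧ X.PosSemidef} = {Xstar} :=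
  psd_feasible_set_singleton_general A b Xstar hXstarPSD hXstarFit φ V hV hsum M hM Ystar hYstar
    hYstarUnique
end

section
/- Let A ∈ ℝ^{m×n} and b ∈ ℝ^m, and suppose there exists w ∈ ℝ^m such that every entry of Aᵀ w equals 1. Suppose further that x⋆ ∈ ℝ^n is entrywise nonnegative, satisfies A x⋆ = b, and is the unique minimizer of the ℓ1-norm over the affine set {x ∈ ℝ^n : A x = b} (every x with A x = b and x ≠ x⋆ has ‖x⋆‖_1 < ‖x‖_1). Then the feasibility set {x ∈ ℝ^n : A x = b, x ≥ 0} is exactly the singleton {x⋆}. -/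
/-!
Since `Aᵀ w = 𝟙`, the ℓ1-norm of a nonnegative `x` is the linear functional `x ↦ w ⬝ A x`, so
it takes the constant value `w ⬝ b` on the nonnegative feasibility set. A feasible `x ≠ x⋆`
would then have the same ℓ1-norm as `x⋆`, contradicting uniqueness of the minimizer.
-/

open Matrix

variable {R m n : Type*} [Fintype m] [Fintype n]

theorem sum_eq_dotProduct_mulVec [CommSemiring R] {A : Matrix m n R} {w : m → R}
    (hw : ∀ j, (Aᵀ *ᵥ w) j = 1) (x : n → R) :
    ∑ i, x i = w ⬝ᵥ (A *ᵥ x) := by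
  rw [dotProduct_mulVec, ← mulVec_transpose]
  simp [dotProduct, hw]

theorem sum_abs_eq_dotProduct_mulVec_of_nonneg [CommRing R] [LinearOrder R] [IsOrderedRing R]
    {A : Matrix m n R} {w : m → R} (hw : ∀ j, (Aᵀ *ᵥ w) j = 1) {x : n → R}
    (hx : ∀ i, 0 ≤ x i) :
    ∑ i, |x i| = w ⬝ᵥ (A *ᵥ x) := by
  rw [← sum_eq_dotProduct_mulVec hw]
  exact Finset.sum_congr rfl fun i _ => abs_of_nonneg (hx i)

/-- If the all-ones vector lies in the row span of `A`, `x⋆ ≥ 0` solves `A x⋆ = b`,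
and `x⋆` is the unique ℓ1-norm minimizer over the affine set `{x | A x = b}`, then the
nonnegative feasibility set `{x | A x = b, x ≥ 0}` is exactly `{x⋆}`. -/
theorem nonneg_feasible_set_singleton
    {m n : ℕ}
    (A : Matrix (Fin m) (Fin n) ℝ)
    (b : Fin m → ℝ)
    (w : Fin m → ℝ)
    (hw : ∀ j, (Aᵀ *ᵥ w) j = 1)
    (xstar : Fin n → ℝ)
    (hxstarNonneg : ∀ i, 0 ≤ xstar i)
    (hxstarFit : A *ᵥ xstar = b)
    (hxstarUnique : ∀ x : Fin n → ℝ, A *ᵥ x = b → x ≠ xstar →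
      ∑ i, |xstar i| < ∑ i, |x i|) :
    {x : Fin n → ℝ | A *ᵥ x = b ∧ ∀ i, 0 ≤ x i} = {xstar} := by
  ext x
  refine ⟨fun ⟨hfit, hnonneg⟩ => ?_, ?_⟩
  · by_contra hne
    have hlt := hxstarUnique x hfit hne
    rw [sum_abs_eq_dotProduct_mulVec_of_nonneg hw hnonneg,
      sum_abs_eq_dotProduct_mulVec_of_nonneg hw hxstarNonneg, hfit, hxstarFit] at hlt
    exact lt_irrefl _ hlt
  · rintro rfl
    exact ⟨hxstarFit, hxstarNonneg⟩
end
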